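/- arXiv:2010.15917 — 3 statements merged into one kernel-verified Lean document; each statement's English description precedes it below -/
import Mathlib

section
/- For every real b ≥ 0, ∫_b^∞ y⁶·φ(y) dy ≤ 84·(1 + b⁵)·(φ(b) + Ψ(b)), where φ is the standard Gaussian density and Ψ its survival function. -/
noncomputable def phi (y : ℝ) : ℝ := (Real.sqrt (2 * Real.pi))⁻¹ * Real.exp (-y^2 / 2)
noncomputable def Psi (b : ℝ) : ℝ := ∫ y in Set.Ioi b, phi y

/-!
Since `φ' = -y φ`, integration by parts gives
`∫_b^∞ y^(n+2) φ = b^(n+1) φ(b) + (n+1) ∫_b^∞ y^n φ`. Applied three times this yields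
`∫_b^∞ y⁶ φ = (b⁵ + 5b³ + 15b) φ(b) + 15 Ψ(b)`, and for `b ≥ 0` each of `b⁵, b³, b, 1` is at most
`1 + b⁵`, so both coefficients are at most `84 (1 + b⁵)`.
-/

open Real MeasureTheory Set Filter Topology

lemma phi_eq_mul_exp (y : ℝ) : phi y = (√(2 * π))⁻¹ * exp (-(1 / 2) * y ^ 2) := by
  rw [phi]; ring_nf

lemma phi_nonneg (y : ℝ) : 0 ≤ phi y := by
  rw [phi]; positivity

lemma Psi_nonneg (b : ℝ) : 0 ≤ Psi b :=
  setIntegral_nonneg measurableSet_Ioi fun y _ => phi_nonneg y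

lemma hasDerivAt_phi (y : ℝ) : HasDerivAt phi (-y * phi y) y := by
  have h : HasDerivAt (fun y : ℝ => -y ^ 2 / 2) (-y) y := by
    simpa [neg_div] using ((hasDerivAt_pow 2 y).neg.div_const 2)
  unfold phi
  exact (h.exp.const_mul _).congr_deriv (by ring)

lemma integrable_pow_mul_phi (n : ℕ) : Integrable fun y => y ^ n * phi y := by
  have h := (integrable_rpow_mul_exp_neg_mul_sq (b := 1 / 2) (by norm_num)
    (s := n) (by linarith [n.cast_nonneg (α := ℝ)])).const_mul (√(2 * π))⁻¹
  refine h.congr (Eventually.of_forall fun y => ?_)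
  simp only [rpow_natCast, phi_eq_mul_exp]; ring

lemma tendsto_pow_mul_phi_atTop (n : ℕ) : Tendsto (fun y => y ^ n * phi y) atTop (𝓝 0) := by
  have h := ((tendsto_rpow_abs_mul_exp_neg_mul_sq_cocompact (a := 1 / 2) (by norm_num)
    n).mono_left atTop_le_cocompact).const_mul (√(2 * π))⁻¹
  rw [mul_zero] at h
  refine tendsto_zero_iff_norm_tendsto_zero.2 (h.congr fun y => ?_)
  rw [norm_mul, norm_pow, norm_of_nonneg (phi_nonneg y), norm_eq_abs, rpow_natCast,
    phi_eq_mul_exp]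
  ring

lemma integral_Ioi_pow_add_two_mul_phi (n : ℕ) (b : ℝ) :
    ∫ y in Ioi b, y ^ (n + 2) * phi y =
      b ^ (n + 1) * phi b + (n + 1) * ∫ y in Ioi b, y ^ n * phi y := by
  have hderiv (y : ℝ) : HasDerivAt (fun y => -(y ^ (n + 1) * phi y))
      (y ^ (n + 2) * phi y - (n + 1) * (y ^ n * phi y)) y := by
    refine ((hasDerivAt_pow (n + 1) y).mul (hasDerivAt_phi y)).neg.congr_deriv ?_
    rw [add_tsub_cancel_right]; push_cast; ring
  have hint := (integrable_pow_mul_phi (n + 2)).sub ((integrable_pow_mul_phi n).const_mul (n + 1))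
  have hftc := integral_Ioi_of_hasDerivAt_of_tendsto' (a := b) (fun y _ => hderiv y)
    hint.integrableOn (by simpa using (tendsto_pow_mul_phi_atTop (n + 1)).neg)
  rw [integral_sub (integrable_pow_mul_phi (n + 2)).integrableOn
    ((integrable_pow_mul_phi n).const_mul _).integrableOn, integral_const_mul] at hftc
  linarith

lemma integral_Ioi_pow_six_mul_phi (b : ℝ) :
    ∫ y in Ioi b, y ^ 6 * phi y = (b ^ 5 + 5 * b ^ 3 + 15 * b) * phi b + 15 * Psi b := by
  have h6 := integral_Ioi_pow_add_two_mul_phi 4 b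
  have h4 := integral_Ioi_pow_add_two_mul_phi 2 b
  have h2 := integral_Ioi_pow_add_two_mul_phi 0 b
  simp only [pow_zero, one_mul] at h2
  rw [h6, h4, h2, Psi]; push_cast; ring

lemma pow_le_one_add_pow {b : ℝ} (hb : 0 ≤ b) {k m : ℕ} (hkm : k ≤ m) : b ^ k ≤ 1 + b ^ m := by
  rcases le_total b 1 with h | h
  · linarith [pow_le_one₀ hb h (n := k), pow_nonneg hb m]
  · linarith [pow_le_pow_right₀ h hkm]

theorem stmt_15 (b : ℝ) (hb : 0 ≤ b) :
    ∫ y in Set.Ioi b, y^6 * phi y ≤ 84 * (1 + b^5) * (phi b + Psi b) := by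
  rw [integral_Ioi_pow_six_mul_phi]
  have hb3 := pow_le_one_add_pow hb (show 3 ≤ 5 by norm_num)
  have hb1 := pow_le_one_add_pow hb (show 1 ≤ 5 by norm_num)
  rw [pow_one] at hb1
  have hcoeff : b ^ 5 + 5 * b ^ 3 + 15 * b ≤ 84 * (1 + b ^ 5) := by linarith [pow_nonneg hb 5]
  have hconst : 15 ≤ 84 * (1 + b ^ 5) := by linarith [pow_nonneg hb 5]
  linarith [mul_le_mul_of_nonneg_right hcoeff (phi_nonneg b),
    mul_le_mul_of_nonneg_right hconst (Psi_nonneg b)]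
end

section
/- Fix an integer m ≥ 2 and let T : ℝ → ℝ be defined by T(s) = (1 − 1/(12m))·s + s³/(3m²). Then T is strictly increasing on ℝ, and for every real z̃ with |z̃| ≤ √(m·log m) and m ≥ 1000, the unique real s with T(s) = z̃ satisfies |s − (z̃ + z̃/(12m) − z̃³/(3m²))| ≤ (m²·|z̃| + m·|z̃|³ + |z̃|⁵)/(3m⁴). -/
/-!
Write `w = 1/m`, so that `T(s) = (1 - w/12) s + (w²/3) s³`. Since `T` is strictly increasing and
odd, it suffices, for `z ≥ 0`, to check `T(s₀ - ε) ≤ z ≤ T(s₀ + ε)` at the two-term inverse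
`s₀ = z + wz/12 - w²z³/3` with `ε = (w²/3)(z + wz³ + w²z⁵)`. Expanding `T(z + δ)` around `z`,
both inequalities reduce to comparing explicit monomials in `w` and `z`, which works as soon as
`w ≤ 1/1000` and `w²z² ≤ 1/15`; the latter follows from `z² ≤ m log m` and `log m ≤ m/15`.
-/

theorem abs_sub_le_of_strictMono {α β : Type*} [AddCommGroup α] [LinearOrder α]
    [IsOrderedAddMonoid α] [Preorder β] {f : α → β} (hf : StrictMono f) {x c ε : α}
    (hlo : f (c - ε) ≤ f x) (hhi : f x ≤ f (c + ε)) : |x - c| ≤ ε :=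
  abs_sub_le_iff.2 ⟨sub_le_iff_le_add'.2 (hf.le_iff_le.1 hhi), sub_le_comm.1 (hf.le_iff_le.1 hlo)⟩

theorem Real.log_le_div_fifteen {x : ℝ} (hx : 900 ≤ x) : Real.log x ≤ x / 15 := by
  have h30 : 30 ≤ √x := Real.le_sqrt_of_sq_le (by linarith)
  calc Real.log x ≤ x ^ (1/2 : ℝ) / (1/2) := Real.log_le_rpow_div (by linarith) (by norm_num)
    _ = 2 * √x := by rw [← Real.sqrt_eq_rpow]; ring
    _ ≤ √x * √x / 15 := by nlinarith
    _ = x / 15 := by rw [Real.mul_self_sqrt (by linarith)]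

noncomputable def cubicCorrection (w s : ℝ) : ℝ := (1 - w / 12) * s + w ^ 2 / 3 * s ^ 3

noncomputable def invApprox (w z : ℝ) : ℝ := z + w * z / 12 - w ^ 2 * z ^ 3 / 3

noncomputable def invError (w z : ℝ) : ℝ := w ^ 2 / 3 * (z + w * z ^ 3 + w ^ 2 * z ^ 5)

theorem cubicCorrection_strictMono {w : ℝ} (hw : w < 12) : StrictMono (cubicCorrection w) :=
  (strictMono_mul_left_of_pos (by linarith : 0 < 1 - w / 12)).add_monotone
    ((Odd.strictMono_pow (by decide : Odd 3)).monotone.const_mul (by positivity))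

theorem cubicCorrection_neg (w s : ℝ) : cubicCorrection w (-s) = -cubicCorrection w s := by
  simp only [cubicCorrection]; ring

theorem invApprox_neg (w z : ℝ) : invApprox w (-z) = -invApprox w z := by
  simp only [invApprox]; ring

theorem cubicCorrection_add_sub (w z δ : ℝ) :
    cubicCorrection w (z + δ) - z =
      δ * (1 - w / 12 + w ^ 2 * z ^ 2) - (w * z / 12 - w ^ 2 * z ^ 3 / 3)
        + w ^ 2 / 3 * δ ^ 2 * (3 * z + δ) := by
  simp only [cubicCorrection]; ring

section
variable {w z : ℝ} (hw₀ : 0 ≤ w) (hw : w ≤ 1 / 1000) (hz : 0 ≤ z) (hwz : w ^ 2 * z ^ 2 ≤ 1 / 15)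
include hw₀ hw hz hwz

theorem invError_le_quarter : invError w z ≤ z / 4 := by
  rw [invError]
  nlinarith [mul_nonneg (sub_nonneg.2 hwz) (mul_nonneg hw₀ hz),
    mul_nonneg (mul_nonneg (sub_nonneg.2 hwz) (by positivity : (0 : ℝ) ≤ w ^ 2 * z ^ 2)) hz,
    mul_nonneg (sub_nonneg.2 hwz) hz, mul_nonneg hw₀ hz, mul_nonneg (mul_nonneg hw₀ hw₀) hz]

theorem le_cubicCorrection_invApprox_add_invError :
    z ≤ cubicCorrection w (invApprox w z + invError w z) := by
  set δ := w * z / 12 - w ^ 2 * z ^ 3 / 3 + invError w z with hδ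
  have hexpand := cubicCorrection_add_sub w z δ
  have hs : invApprox w z + invError w z = z + δ := by rw [hδ, invApprox]; ring
  have hδ3z : 0 ≤ 3 * z + δ := by
    simp only [hδ, invError]
    nlinarith [mul_nonneg hw₀ hz, mul_nonneg (sub_nonneg.2 hwz) hz]
  have hcube : 0 ≤ w ^ 2 / 3 * δ ^ 2 * (3 * z + δ) := by positivity
  have : 0 ≤ δ * (1 - w / 12 + w ^ 2 * z ^ 2) - (w * z / 12 - w ^ 2 * z ^ 3 / 3) := by
    simp only [hδ, invError]
    -- the only negative monomial of the expansion is `-w³z/36`, dominated by `w²z/3`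
    have h1 : 0 ≤ w ^ 2 * z * (1/1000 - w) := by positivity
    have h2 : 0 ≤ w ^ 2 * z := by positivity
    have h3 : 0 ≤ w ^ 3 * z ^ 3 := by positivity
    have h4 : 0 ≤ w ^ 4 * z ^ 3 := by positivity
    have h5 : 0 ≤ w ^ 5 * z ^ 5 := by positivity
    have h6 : 0 ≤ w ^ 6 * z ^ 7 := by positivity
    nlinarith
  rw [hs]; linarith

theorem cubicCorrection_invApprox_sub_invError_le :
    cubicCorrection w (invApprox w z - invError w z) ≤ z := by
  set ε := invError w z with hε
  set δ := w * z / 12 - w ^ 2 * z ^ 3 / 3 - ε with hδ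
  have hexpand := cubicCorrection_add_sub w z δ
  have hs : invApprox w z - ε = z + δ := by rw [hδ, invApprox]; ring
  have hε₀ : 0 ≤ ε := by rw [hε, invError]; positivity
  have hεz : ε ≤ z / 4 := invError_le_quarter hw₀ hw hz hwz
  have hδz : δ ≤ z := by
    rw [hδ]
    nlinarith [mul_nonneg hw₀ hz, mul_nonneg (mul_nonneg hw₀ hw₀) (pow_nonneg hz 3)]
  have hδsq : δ ^ 2 ≤ 3 * ((w * z / 12) ^ 2 + (w ^ 2 * z ^ 3 / 3) ^ 2 + ε ^ 2) := by
    rw [hδ]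
    nlinarith [sq_nonneg (w * z / 12 + w ^ 2 * z ^ 3 / 3), sq_nonneg (w * z / 12 + ε),
      sq_nonneg (w ^ 2 * z ^ 3 / 3 - ε)]
  have hcube : w ^ 2 / 3 * δ ^ 2 * (3 * z + δ) ≤
      4 * w ^ 2 * z * ((w * z / 12) ^ 2 + (w ^ 2 * z ^ 3 / 3) ^ 2) + w ^ 2 * z ^ 2 * ε :=
    calc w ^ 2 / 3 * δ ^ 2 * (3 * z + δ)
        ≤ w ^ 2 / 3 * δ ^ 2 * (4 * z) := by gcongr; linarith
      _ ≤ w ^ 2 / 3 * (3 * ((w * z / 12) ^ 2 + (w ^ 2 * z ^ 3 / 3) ^ 2 + ε ^ 2)) * (4 * z) := by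
        gcongr
      _ = 4 * w ^ 2 * z * ((w * z / 12) ^ 2 + (w ^ 2 * z ^ 3 / 3) ^ 2)
            + w ^ 2 * z * (4 * ε) * ε := by
        ring
      _ ≤ 4 * w ^ 2 * z * ((w * z / 12) ^ 2 + (w ^ 2 * z ^ 3 / 3) ^ 2) + w ^ 2 * z * z * ε := by
        gcongr; linarith
      _ = _ := by ring
  have : δ * (1 - w / 12 + w ^ 2 * z ^ 2) - (w * z / 12 - w ^ 2 * z ^ 3 / 3)
      + 4 * w ^ 2 * z * ((w * z / 12) ^ 2 + (w ^ 2 * z ^ 3 / 3) ^ 2) + w ^ 2 * z ^ 2 * ε ≤ 0 := by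
    simp only [hδ, hε, invError]
    -- each positive monomial of the expansion is dominated by a negative one,
    -- using `w ≤ 1/1000` (`h1`, `h2`, `h3`) or `w²z² ≤ 1/15` (`h4`)
    have h1 : 0 ≤ w ^ 2 * z * (1/1000 - w) := by positivity
    have h2 : 0 ≤ w ^ 3 * z ^ 3 * (1/1000 - w) := by positivity
    have h3 : 0 ≤ w ^ 4 * z ^ 5 * (1/1000 - w) := by positivity
    have h4 : 0 ≤ w ^ 4 * z ^ 5 * (1/15 - w ^ 2 * z ^ 2) := by positivity
    have h5 : 0 ≤ w ^ 2 * z := by positivity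
    have h6 : 0 ≤ w ^ 3 * z ^ 3 := by positivity
    have h7 : 0 ≤ w ^ 4 * z ^ 5 := by positivity
    nlinarith
  rw [hs]; linarith

end

theorem abs_sub_invApprox_le {w z s : ℝ} (hw₀ : 0 ≤ w) (hw : w ≤ 1 / 1000)
    (hwz : w ^ 2 * z ^ 2 ≤ 1 / 15) (hs : cubicCorrection w s = z) :
    |s - invApprox w z| ≤ invError w |z| := by
  have of_nonneg {z s : ℝ} (hz : 0 ≤ z) (hwz : w ^ 2 * z ^ 2 ≤ 1 / 15)
      (hs : cubicCorrection w s = z) : |s - invApprox w z| ≤ invError w z :=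
    abs_sub_le_of_strictMono (cubicCorrection_strictMono (w := w) (by linarith))
      (by rw [hs]; exact cubicCorrection_invApprox_sub_invError_le hw₀ hw hz hwz)
      (by rw [hs]; exact le_cubicCorrection_invApprox_add_invError hw₀ hw hz hwz)
  rcases le_total 0 z with hz | hz
  · rw [abs_of_nonneg hz]
    exact of_nonneg hz hwz hs
  · have h := of_nonneg (neg_nonneg.2 hz) (by rwa [neg_sq]) (by rw [cubicCorrection_neg, hs])
    rwa [invApprox_neg, neg_sub_neg, abs_sub_comm, ← abs_of_nonpos hz] at h

theorem stmt_17_general (m : ℕ) :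
    StrictMono (fun s : ℝ => (1 - 1/(12*(m:ℝ))) * s + s^3/(3*(m:ℝ)^2)) ∧
    ∀ ztil : ℝ, |ztil| ≤ Real.sqrt (m * Real.log m) → 1000 ≤ m →
      ∀ s : ℝ, (1 - 1/(12*(m:ℝ))) * s + s^3/(3*(m:ℝ)^2) = ztil →
        |s - (ztil + ztil/(12*(m:ℝ)) - ztil^3/(3*(m:ℝ)^2))| ≤
          ((m:ℝ)^2 * |ztil| + (m:ℝ) * |ztil|^3 + |ztil|^5) / (3*(m:ℝ)^4) := by
  have hT : (fun s : ℝ => (1 - 1/(12*(m:ℝ))) * s + s^3/(3*(m:ℝ)^2)) = cubicCorrection (m:ℝ)⁻¹ := by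
    funext s; simp only [cubicCorrection]; ring
  refine ⟨hT ▸ cubicCorrection_strictMono (by linarith [Nat.cast_inv_le_one (α := ℝ) m]), ?_⟩
  intro z hz hm s hs
  have hM : (1000 : ℝ) ≤ m := by exact_mod_cast hm
  have hz2 : z ^ 2 ≤ m * Real.log m := by
    rw [← sq_abs]
    exact (Real.le_sqrt (abs_nonneg z) (by positivity)).1 hz
  have hwz : (m:ℝ)⁻¹ ^ 2 * z ^ 2 ≤ 1 / 15 := by
    rw [inv_pow, inv_mul_le_iff₀ (by positivity)]
    nlinarith [Real.log_le_div_fifteen (x := m) (by linarith)]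
  have hbound := abs_sub_invApprox_le (by positivity)
    (inv_le_of_inv_le₀ (by norm_num) (by linarith)) hwz (congrFun hT s ▸ hs)
  convert hbound using 2
  · simp only [invApprox]; ring
  · simp only [invError]; field_simp

theorem stmt_17 (m : ℕ) (hm : 2 ≤ m) :
    StrictMono (fun s : ℝ => (1 - 1/(12*(m:ℝ))) * s + s^3/(3*(m:ℝ)^2)) ∧
    ∀ ztil : ℝ, |ztil| ≤ Real.sqrt (m * Real.log m) → 1000 ≤ m →
      ∀ s : ℝ, (1 - 1/(12*(m:ℝ))) * s + s^3/(3*(m:ℝ)^2) = ztil →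
        |s - (ztil + ztil/(12*(m:ℝ)) - ztil^3/(3*(m:ℝ)^2))| ≤
          ((m:ℝ)^2 * |ztil| + (m:ℝ) * |ztil|^3 + |ztil|^5) / (3*(m:ℝ)^4) :=
  stmt_17_general m
end

section
/- For every positive integer n, n! = √(2π)·exp((n + 1/2)·log n − n + 1/(12n) + λ_n) for some real λ_n with |λ_n| ≤ 1/(360·n³). -/
/-!
With `y = 1 / (2n + 1)²`, the series
`Δₙ = log (stirlingSeq n) - log (stirlingSeq (n + 1)) = ∑_{k ≥ 1} y^k / (2k + 1)`
is squeezed between its first two terms and the geometric series `∑ y^k / 3`. This gives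
`1/(12n) - 1/(12(n+1)) - (1/(360n³) - 1/(360(n+1)³)) ≤ Δₙ ≤ 1/(12n) - 1/(12(n+1))`,
so `log (stirlingSeq n) - 1/(12n)` increases and `log (stirlingSeq n) - 1/(12n) + 1/(360n³)`
decreases, both towards `log √π`.
-/

open Real Filter Topology Stirling
open scoped Nat

lemma log_stirlingSeq_sdiff_le_twelfth_sdiff (m : ℕ) :
    log (stirlingSeq (m + 1)) - log (stirlingSeq (m + 2)) ≤
      1 / (12 * (m + 1 : ℝ)) - 1 / (12 * (m + 2 : ℝ)) := by
  set y : ℝ := (1 / (2 * ↑(m + 1) + 1)) ^ 2 with hy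
  have hy0 : 0 ≤ y := sq_nonneg _
  have hy1 : y < 1 := by
    rw [hy, div_pow, one_pow, div_lt_one (by positivity)]
    push_cast
    nlinarith [m.cast_nonneg (α := ℝ)]
  have hgeom := (hasSum_geometric_of_lt_one hy0 hy1).mul_left (y / 3)
  have hterm (k : ℕ) : 1 / (2 * ↑(k + 1) + 1) * y ^ (k + 1) ≤ y / 3 * y ^ k :=
    calc 1 / (2 * ↑(k + 1) + 1) * y ^ (k + 1)
        ≤ 1 / 3 * y ^ (k + 1) := by
          gcongr
          push_cast
          linarith [k.cast_nonneg (α := ℝ)]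
      _ = y / 3 * y ^ k := by ring
  have hy_compl : 1 - y = 4 * (m + 1) * (m + 2) / (2 * (m + 1) + 1) ^ 2 := by
    rw [hy]
    push_cast
    field_simp
    ring
  refine (hasSum_le hterm (log_stirlingSeq_sdiff_hasSum m) hgeom).trans_eq ?_
  rw [hy_compl, hy]
  push_cast
  field_simp
  ring

lemma one_div_twelve_sdiff_sub_le {N : ℝ} (hN : 0 < N) :
    1 / (12 * N) - 1 / (12 * (N + 1)) - (1 / (360 * N ^ 3) - 1 / (360 * (N + 1) ^ 3)) ≤
      1 / (3 * (2 * N + 1) ^ 2) + 1 / (5 * (2 * N + 1) ^ 4) := by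
  rw [← sub_nonneg]
  have key : 1 / (3 * (2 * N + 1) ^ 2) + 1 / (5 * (2 * N + 1) ^ 4) -
      (1 / (12 * N) - 1 / (12 * (N + 1)) - (1 / (360 * N ^ 3) - 1 / (360 * (N + 1) ^ 3))) =
      (10 * N ^ 4 + 20 * N ^ 3 + 21 * N ^ 2 + 11 * N + 1) /
        (360 * N ^ 3 * (N + 1) ^ 3 * (2 * N + 1) ^ 4) := by
    field_simp
    ring
  rw [key]
  positivity

lemma twelfth_sdiff_sub_le_log_stirlingSeq_sdiff (m : ℕ) :
    1 / (12 * (m + 1 : ℝ)) - 1 / (12 * (m + 2 : ℝ)) -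
        (1 / (360 * (m + 1 : ℝ) ^ 3) - 1 / (360 * (m + 2 : ℝ) ^ 3)) ≤
      log (stirlingSeq (m + 1)) - log (stirlingSeq (m + 2)) := by
  have hsum := sum_le_hasSum (Finset.range 2) (fun k _ => by positivity)
    (log_stirlingSeq_sdiff_hasSum m)
  have hfirst_two : ∑ k ∈ Finset.range 2,
      (1 : ℝ) / (2 * ↑(k + 1) + 1) * ((1 / (2 * ↑(m + 1) + 1)) ^ 2) ^ (k + 1) =
      1 / (3 * (2 * (m + 1 : ℝ) + 1) ^ 2) + 1 / (5 * (2 * (m + 1 : ℝ) + 1) ^ 4) := by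
    simp only [Finset.sum_range_succ, Finset.sum_range_zero]
    push_cast
    field_simp
    ring
  have hpoly := one_div_twelve_sdiff_sub_le (N := (m + 1 : ℝ)) (by positivity)
  rw [show (m + 1 : ℝ) + 1 = m + 2 by ring] at hpoly
  linarith

lemma monotone_log_stirlingSeq_sub_twelfth :
    Monotone fun m : ℕ => log (stirlingSeq (m + 1)) - 1 / (12 * (m + 1 : ℝ)) := by
  refine monotone_nat_of_le_succ fun m => ?_
  have h := log_stirlingSeq_sdiff_le_twelfth_sdiff m
  push_cast
  rw [show (m + 1 + 1 : ℝ) = m + 2 by ring]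
  linarith

lemma antitone_log_stirlingSeq_sub_twelfth_add :
    Antitone fun m : ℕ =>
      log (stirlingSeq (m + 1)) - 1 / (12 * (m + 1 : ℝ)) + 1 / (360 * (m + 1 : ℝ) ^ 3) := by
  refine antitone_nat_of_succ_le fun m => ?_
  have h := twelfth_sdiff_sub_le_log_stirlingSeq_sdiff m
  push_cast
  rw [show (m + 1 + 1 : ℝ) = m + 2 by ring]
  linarith

lemma tendsto_log_stirlingSeq_sub_twelfth :
    Tendsto (fun m : ℕ => log (stirlingSeq (m + 1)) - 1 / (12 * (m + 1 : ℝ))) atTop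
      (𝓝 (log √π)) := by
  have hlog : Tendsto (fun m : ℕ => log (stirlingSeq (m + 1))) atTop (𝓝 (log √π)) :=
    ((tendsto_stirlingSeq_sqrt_pi.log (by positivity)).comp (tendsto_add_atTop_nat 1) :)
  have hsucc : Tendsto (fun m : ℕ => (m + 1 : ℝ)) atTop atTop :=
    tendsto_atTop_add_const_right _ 1 tendsto_natCast_atTop_atTop
  simpa using hlog.sub <| (tendsto_const_nhds (x := (1 : ℝ))).div_atTop <|
    hsucc.const_mul_atTop (by norm_num : (0 : ℝ) < 12)

lemma tendsto_log_stirlingSeq_sub_twelfth_add :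
    Tendsto (fun m : ℕ =>
        log (stirlingSeq (m + 1)) - 1 / (12 * (m + 1 : ℝ)) + 1 / (360 * (m + 1 : ℝ) ^ 3)) atTop
      (𝓝 (log √π)) := by
  have hcube : Tendsto (fun m : ℕ => (m + 1 : ℝ) ^ 3) atTop atTop :=
    (tendsto_pow_atTop three_ne_zero).comp
      (tendsto_atTop_add_const_right _ 1 tendsto_natCast_atTop_atTop)
  simpa using tendsto_log_stirlingSeq_sub_twelfth.add
    ((tendsto_const_nhds (x := (1 : ℝ))).div_atTop <|
      hcube.const_mul_atTop (by norm_num : (0 : ℝ) < 360))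

lemma log_stirlingSeq_div_sqrt_pi_mem {n : ℕ} (hn : n ≠ 0) :
    1 / (12 * n) - 1 / (360 * (n : ℝ) ^ 3) ≤ log (stirlingSeq n / √π) ∧
      log (stirlingSeq n / √π) ≤ 1 / (12 * n) := by
  obtain ⟨m, rfl⟩ := Nat.exists_eq_succ_of_ne_zero hn
  have hlower := monotone_log_stirlingSeq_sub_twelfth.ge_of_tendsto
    tendsto_log_stirlingSeq_sub_twelfth m
  have hupper := antitone_log_stirlingSeq_sub_twelfth_add.le_of_tendsto
    tendsto_log_stirlingSeq_sub_twelfth_add m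
  have hpos : 0 < stirlingSeq (m + 1) := stirlingSeq'_pos m
  rw [log_div hpos.ne' (by positivity)]
  push_cast at hlower hupper ⊢
  constructor <;> linarith

lemma factorial_eq_sqrt_two_pi_mul_exp {n : ℕ} (hn : n ≠ 0) :
    (n ! : ℝ) = √(2 * π) * exp ((n + 1 / 2) * log n - n + log (stirlingSeq n / √π)) := by
  have hn' : (n : ℝ) ≠ 0 := Nat.cast_ne_zero.mpr hn
  have hpos : 0 < stirlingSeq n := (sqrt_pos.mpr pi_pos).trans_le (sqrt_pi_le_stirlingSeq hn)
  rw [← exp_log (by positivity : 0 < √(2 * π)), ← exp_add,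
    ← exp_log (by positivity : 0 < (n ! : ℝ))]
  congr 1
  rw [log_div hpos.ne' (by positivity), log_stirlingSeq_formula, log_div hn' (exp_ne_zero 1),
    log_exp, log_mul two_ne_zero hn', log_sqrt (by positivity), log_sqrt pi_pos.le,
    log_mul two_ne_zero pi_ne_zero]
  ring

theorem stmt_19 (n : ℕ) (hn : 0 < n) :
    ∃ lam : ℝ, |lam| ≤ 1 / (360 * (n:ℝ)^3) ∧
      (n.factorial : ℝ) = Real.sqrt (2 * Real.pi) *
        Real.exp (((n:ℝ) + 1/2) * Real.log n - n + 1/(12*(n:ℝ)) + lam) := by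
  obtain ⟨hlower, hupper⟩ := log_stirlingSeq_div_sqrt_pi_mem hn.ne'
  refine ⟨log (stirlingSeq n / √π) - 1 / (12 * n), abs_le.mpr ⟨by linarith, ?_⟩, ?_⟩
  · have : (0 : ℝ) ≤ 1 / (360 * (n : ℝ) ^ 3) := by positivity
    linarith
  · rw [factorial_eq_sqrt_two_pi_mul_exp hn.ne', add_assoc _ (1 / _), add_sub_cancel]
end
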